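/- Soundness and Completeness of the TI-GNI encoding C_TIGNI (Theorem 3): Under the stated assumptions on U_2 (including totality), P_1, P_2 satisfy termination-insensitive generalized non-interference (TI-GNI) with respect to (pre, post) if and only if the constraint set C_TIGNI has a semantic solution, i.e., there exist predicates inv, sch_1, sch_2, sch_12 on σ_1 × σ_1 × σ_2 and a function fnr : σ_1 × σ_2 → R satisfying clauses (1)–(5) of C_TIGNI. -/

import Mathlib

/-- `Reach T F v v'`: there is a finite execution of the program `(T, F)`
from `v` ending in the final state `v'`. -/
def Reach {σ : Type*} (T : σ → σ → Prop) (F : σ → Prop) (v v' : σ) : Prop :=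
  ∃ (n : ℕ) (u : ℕ → σ), u 0 = v ∧ (∀ j < n, T (u j) (u (j + 1))) ∧ u n = v' ∧ F v'

/-- `Diverge T F v`: there is an infinite non-final execution of `(T, F)` from `v`. -/
def Diverge {σ : Type*} (T : σ → σ → Prop) (F : σ → Prop) (v : σ) : Prop :=
  ∃ u : ℕ → σ, u 0 = v ∧ (∀ j, T (u j) (u (j + 1))) ∧ (∀ j, ¬ F (u j))

/-!
Soundness: fix the prophecy `p` to be the final state `v₁'` of the given run of `P₁`. Along the
run of `P₁` from `v₁` to `p`, the schedule and `fnr` drive a joint execution that keeps `inv`.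
A step of `P₁` alone moves forward on that finite run, so after finitely many of them either both
programs are final, where clause (2) yields `post`, or `P₂` takes a step from a non-final state;
iterating, `P₂` terminates with `post` or diverges.

Completeness: take `inv p x₁ x₂` to say that if `x₁ ⇓₁ p` then `x₂` has a run that diverges or
terminates in a state related to `p` by `post`; run `P₁` to its end first, then let `fnr` pick
the choice value of a step of such a run of `P₂`.
-/

open Relation

section

variable {σ σ₁ σ₂ R : Type*}

section Runs

variable {T : σ → σ → Prop} {F : σ → Prop}

lemma reflTransGen_of_path {u : ℕ → σ} :
    ∀ {n : ℕ}, (∀ j < n, T (u j) (u (j + 1))) → ReflTransGen T (u 0) (u n)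
  | 0, _ => .refl
  | n + 1, h => (reflTransGen_of_path fun j hj ↦ h j (by omega)).tail (h n (by omega))

lemma exists_path_of_reflTransGen {a b : σ} (h : ReflTransGen T a b) :
    ∃ (n : ℕ) (u : ℕ → σ), u 0 = a ∧ (∀ j < n, T (u j) (u (j + 1))) ∧ u n = b := by
  induction h using ReflTransGen.head_induction_on with
  | refl => exact ⟨0, fun _ ↦ b, rfl, by simp, rfl⟩
  | @head a c hac _ ih =>
    obtain ⟨n, u, rfl, hu, rfl⟩ := ih
    refine ⟨n + 1, fun | 0 => a | j + 1 => u j, rfl, ?_, rfl⟩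
    rintro (_ | j) hj
    exacts [hac, hu j (by omega)]

lemma reach_iff {v v' : σ} : Reach T F v v' ↔ ReflTransGen T v v' ∧ F v' := by
  constructor
  · rintro ⟨n, u, rfl, hu, rfl, hF⟩
    exact ⟨reflTransGen_of_path hu, hF⟩
  · rintro ⟨h, hF⟩
    obtain ⟨n, u, hu0, hu, hun⟩ := exists_path_of_reflTransGen h
    exact ⟨n, u, hu0, hu, hun, hF⟩

lemma Reach.refl {v : σ} (h : F v) : Reach T F v v := reach_iff.2 ⟨.refl, h⟩

lemma Reach.head {v w v' : σ} (hT : T v w) (h : Reach T F w v') : Reach T F v v' :=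
  have ⟨h, hF⟩ := reach_iff.1 h
  reach_iff.2 ⟨h.head hT, hF⟩

lemma Relation.ReflTransGen.eq_of_final (hfix : ∀ v v', F v → T v v' → v' = v) {v v' : σ} (hF : F v)
    (h : ReflTransGen T v v') : v' = v := by
  induction h with
  | refl => rfl
  | tail _ hT ih => subst ih; exact hfix _ _ hF hT

lemma Reach.eq_of_final (hfix : ∀ v v', F v → T v v' → v' = v) {v v' : σ} (hF : F v)
    (h : Reach T F v v') : v' = v :=
  ReflTransGen.eq_of_final hfix hF (reach_iff.1 h).1

lemma diverge_of_forall_exists {G : σ → Prop} (hG : ∀ x, G x → ¬ F x ∧ ∃ y, T x y ∧ G y)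
    {x : σ} (hx : G x) : Diverge T F x := by
  choose next hnext using fun x : Subtype G ↦
    have ⟨y, hT, hy⟩ := (hG x x.2).2
    (⟨⟨y, hy⟩, hT⟩ : ∃ y : Subtype G, T x y)
  refine ⟨fun j ↦ (next^[j] ⟨x, hx⟩).1, rfl, fun j ↦ ?_, fun j ↦ (hG _ (next^[j] _).2).1⟩
  simpa only [Function.iterate_succ_apply'] using hnext _

end Runs

section TISat

variable {T : σ → σ → Prop} {F : σ → Prop} {P : σ → Prop}

def TISat (T : σ → σ → Prop) (F P : σ → Prop) (x : σ) : Prop :=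
  (∃ y, Reach T F x y ∧ P y) ∨ Diverge T F x

lemma TISat.of_final (hfix : ∀ v v', F v → T v v' → v' = v) {x : σ} (hF : F x)
    (h : TISat T F P x) : P x := by
  rcases h with ⟨y, hy, hP⟩ | ⟨u, rfl, -, hu⟩
  · rwa [← hy.eq_of_final hfix hF]
  · exact absurd hF (hu 0)

lemma TISat.exists_step {x : σ} (hF : ¬ F x) (h : TISat T F P x) :
    ∃ y, T x y ∧ TISat T F P y := by
  rcases h with ⟨y, hy, hP⟩ | ⟨u, rfl, hT, hu⟩
  · obtain ⟨h, hFy⟩ := reach_iff.1 hy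
    rcases h.cases_head with rfl | ⟨z, hxz, hz⟩
    · exact absurd hFy hF
    · exact ⟨z, hxz, .inl ⟨y, reach_iff.2 ⟨hz, hFy⟩, hP⟩⟩
  · exact ⟨u 1, hT 0, .inr ⟨fun j ↦ u (j + 1), rfl, fun j ↦ hT (j + 1), fun j ↦ hu (j + 1)⟩⟩

/-- Coinduction principle for `TISat`. -/
lemma TISat.of_progress {G : σ → Prop}
    (hG : ∀ x, G x → (∃ y, Reach T F x y ∧ P y) ∨ (¬ F x ∧ ∃ y, T x y ∧ G y))
    {x : σ} (hx : G x) : TISat T F P x := by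
  by_cases hterm : ∃ y, Reach T F x y ∧ P y
  · exact .inl hterm
  refine .inr (diverge_of_forall_exists (G := fun x ↦ G x ∧ ¬ ∃ y, Reach T F x y ∧ P y)
    (fun x ⟨hx, hterm⟩ ↦ ?_) ⟨hx, hterm⟩)
  obtain ⟨hF, y, hT, hy⟩ := (hG x hx).resolve_left hterm
  exact ⟨hF, y, hT, hy, fun ⟨z, hz, hP⟩ ↦ hterm ⟨z, hz.head hT, hP⟩⟩

end TISat

def TIGNI (T₁ : σ₁ → σ₁ → Prop) (F₁ : σ₁ → Prop) (T₂ : σ₂ → σ₂ → Prop) (F₂ : σ₂ → Prop)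
    (pre post : σ₁ → σ₂ → Prop) : Prop :=
  ∀ v₁ v₂ v₁', pre v₁ v₂ → Reach T₁ F₁ v₁ v₁' → TISat T₂ F₂ (post v₁') v₂

/-- Clauses (1)–(5) of `C_TIGNI`; the first argument `p` of the predicates is the prophecy. -/
structure IsSemanticSolution (T₁ : σ₁ → σ₁ → Prop) (F₁ : σ₁ → Prop) (F₂ : σ₂ → Prop)
    (pre post : σ₁ → σ₂ → Prop) (U₂ : R → σ₂ → σ₂ → Prop)
    (inv sch₁ sch₂ sch₁₂ : σ₁ → σ₁ → σ₂ → Prop) (fnr : σ₁ → σ₂ → R) : Prop where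
  init : ∀ p x₁ x₂, pre x₁ x₂ → inv p x₁ x₂
  final : ∀ p x₁ x₂, inv p x₁ x₂ → F₁ x₁ → F₂ x₂ → p = x₁ → post x₁ x₂
  step₁ : ∀ p x₁ x₁' x₂, inv p x₁ x₂ → sch₁ p x₁ x₂ → T₁ x₁ x₁' → inv p x₁' x₂
  step₂ : ∀ p x₁ x₂ x₂', inv p x₁ x₂ → sch₂ p x₁ x₂ → U₂ (fnr p x₂) x₂ x₂' → inv p x₁ x₂'
  step₁₂ : ∀ p x₁ x₁' x₂ x₂', inv p x₁ x₂ → sch₁₂ p x₁ x₂ → T₁ x₁ x₁' →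
    U₂ (fnr p x₂) x₂ x₂' → inv p x₁' x₂'
  not_final₁ : ∀ p x₁ x₂, inv p x₁ x₂ → sch₁ p x₁ x₂ → (¬ F₁ x₁ ∨ ¬ F₂ x₂) → ¬ F₁ x₁
  not_final₂ : ∀ p x₁ x₂, inv p x₁ x₂ → sch₂ p x₁ x₂ → (¬ F₁ x₁ ∨ ¬ F₂ x₂) → ¬ F₂ x₂
  sched : ∀ p x₁ x₂, inv p x₁ x₂ → (¬ F₁ x₁ ∨ ¬ F₂ x₂) →
    sch₁ p x₁ x₂ ∨ sch₂ p x₁ x₂ ∨ sch₁₂ p x₁ x₂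

section Soundness

variable {T₁ : σ₁ → σ₁ → Prop} {F₁ : σ₁ → Prop} {T₂ : σ₂ → σ₂ → Prop} {F₂ : σ₂ → Prop}
  {pre post : σ₁ → σ₂ → Prop} {U₂ : R → σ₂ → σ₂ → Prop}
  {inv sch₁ sch₂ sch₁₂ : σ₁ → σ₁ → σ₂ → Prop} {fnr : σ₁ → σ₂ → R}

/-- Induction on the run of `P₁` from `x₁` to `p`: steps of `P₁` alone cannot go on forever. -/
lemma IsSemanticSolution.progress
    (hS : IsSemanticSolution T₁ F₁ F₂ pre post U₂ inv sch₁ sch₂ sch₁₂ fnr)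
    (hfix₁ : ∀ v v', F₁ v → T₁ v v' → v' = v) (hloop₁ : ∀ v, F₁ v → T₁ v v)
    (hfix₂ : ∀ v v', F₂ v → T₂ v v' → v' = v) (hU₂T : ∀ w w', T₂ w w' ↔ ∃ r, U₂ r w w')
    (hU₂tot : ∀ r w, ∃ w', U₂ r w w') {p x₁ x₂} (hp : F₁ p) (hx₁ : ReflTransGen T₁ x₁ p)
    (hinv : inv p x₁ x₂) :
    (∃ y, Reach T₂ F₂ x₂ y ∧ post p y) ∨
      (¬ F₂ x₂ ∧ ∃ y, T₂ x₂ y ∧ ∃ y₁, ReflTransGen T₁ y₁ p ∧ inv p y₁ y) := by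
  have hstep₂ (x₂) : ∃ x₂', U₂ (fnr p x₂) x₂ x₂' ∧ T₂ x₂ x₂' :=
    have ⟨x₂', hU⟩ := hU₂tot (fnr p x₂) x₂
    ⟨x₂', hU, (hU₂T _ _).2 ⟨_, hU⟩⟩
  induction hx₁ using ReflTransGen.head_induction_on generalizing x₂ with
  | refl =>
    by_cases hF₂ : F₂ x₂
    · exact .inl ⟨x₂, .refl hF₂, hS.final p p x₂ hinv hp hF₂ rfl⟩
    obtain ⟨x₂', hU, hT⟩ := hstep₂ x₂
    refine .inr ⟨hF₂, x₂', hT, p, .refl, ?_⟩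
    rcases hS.sched _ _ _ hinv (.inr hF₂) with h | h | h
    · exact absurd hp (hS.not_final₁ _ _ _ hinv h (.inr hF₂))
    · exact hS.step₂ _ _ _ _ hinv h hU
    · exact hS.step₁₂ _ _ _ _ _ hinv h (hloop₁ p hp) hU
  | @head x₁ y₁ hT₁ hy₁ ih =>
    by_cases hfin : F₁ x₁ ∧ F₂ x₂
    · have hx₁ : p = x₁ := (hy₁.head hT₁).eq_of_final hfix₁ hfin.1
      exact .inl ⟨x₂, .refl hfin.2, hx₁ ▸ hS.final p x₁ x₂ hinv hfin.1 hfin.2 hx₁⟩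
    have hnf := not_and_or.1 hfin
    obtain ⟨x₂', hU, hT⟩ := hstep₂ x₂
    rcases hS.sched _ _ _ hinv hnf with h | h | h
    · exact ih (hS.step₁ _ _ _ _ hinv h hT₁)
    · exact .inr ⟨hS.not_final₂ _ _ _ hinv h hnf, x₂', hT, x₁, hy₁.head hT₁,
        hS.step₂ _ _ _ _ hinv h hU⟩
    · have hinv' := hS.step₁₂ _ _ _ _ _ hinv h hT₁ hU
      by_cases hF₂ : F₂ x₂
      · -- a final `P₂` stutters, so this was really a step of `P₁` alone
        exact ih (hfix₂ _ _ hF₂ hT ▸ hinv')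
      · exact .inr ⟨hF₂, x₂', hT, y₁, hy₁, hinv'⟩

theorem IsSemanticSolution.tigni
    (hS : IsSemanticSolution T₁ F₁ F₂ pre post U₂ inv sch₁ sch₂ sch₁₂ fnr)
    (hfix₁ : ∀ v v', F₁ v → T₁ v v' → v' = v) (hloop₁ : ∀ v, F₁ v → T₁ v v)
    (hfix₂ : ∀ v v', F₂ v → T₂ v v' → v' = v) (hU₂T : ∀ w w', T₂ w w' ↔ ∃ r, U₂ r w w')
    (hU₂tot : ∀ r w, ∃ w', U₂ r w w') :
    TIGNI T₁ F₁ T₂ F₂ pre post := by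
  intro v₁ v₂ v₁' hpre hreach
  obtain ⟨hrun, hF⟩ := reach_iff.1 hreach
  exact TISat.of_progress (G := fun x₂ ↦ ∃ x₁, ReflTransGen T₁ x₁ v₁' ∧ inv v₁' x₁ x₂)
    (fun _ ⟨_, hx₁, hinv⟩ ↦ hS.progress hfix₁ hloop₁ hfix₂ hU₂T hU₂tot hF hx₁ hinv)
    ⟨v₁, hrun, hS.init _ _ _ hpre⟩

end Soundness

section Completeness

variable {T₁ : σ₁ → σ₁ → Prop} {F₁ : σ₁ → Prop} {T₂ : σ₂ → σ₂ → Prop} {F₂ : σ₂ → Prop}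
  {pre post : σ₁ → σ₂ → Prop} {U₂ : R → σ₂ → σ₂ → Prop}

lemma exists_choice_preserving_tiSat [Nonempty R] (hU₂T : ∀ w w', T₂ w w' ↔ ∃ r, U₂ r w w')
    (hU₂fun : ∀ r w w' w'', U₂ r w w' → U₂ r w w'' → w' = w'') (P : σ₂ → Prop) (x : σ₂) :
    ∃ r, TISat T₂ F₂ P x → ¬ F₂ x → ∀ x', U₂ r x x' → TISat T₂ F₂ P x' := by
  by_cases h : TISat T₂ F₂ P x ∧ ¬ F₂ x
  · obtain ⟨y, hT, hy⟩ := h.1.exists_step h.2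
    obtain ⟨r, hU⟩ := (hU₂T x y).1 hT
    exact ⟨r, fun _ _ x' hU' ↦ hU₂fun r x y x' hU hU' ▸ hy⟩
  · exact ⟨Classical.arbitrary R, fun h₁ h₂ ↦ absurd ⟨h₁, h₂⟩ h⟩

theorem exists_isSemanticSolution_of_tigni [Nonempty R]
    (hfix₂ : ∀ v v', F₂ v → T₂ v v' → v' = v) (hU₂T : ∀ w w', T₂ w w' ↔ ∃ r, U₂ r w w')
    (hU₂fun : ∀ r w w' w'', U₂ r w w' → U₂ r w w'' → w' = w'')
    (h : TIGNI T₁ F₁ T₂ F₂ pre post) :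
    ∃ (inv sch₁ sch₂ sch₁₂ : σ₁ → σ₁ → σ₂ → Prop) (fnr : σ₁ → σ₂ → R),
      IsSemanticSolution T₁ F₁ F₂ pre post U₂ inv sch₁ sch₂ sch₁₂ fnr := by
  choose fnr hfnr using exists_choice_preserving_tiSat (F₂ := F₂) hU₂T hU₂fun
  refine ⟨fun p x₁ x₂ ↦ Reach T₁ F₁ x₁ p → TISat T₂ F₂ (post p) x₂,
    fun _ x₁ _ ↦ ¬ F₁ x₁, fun _ x₁ x₂ ↦ F₁ x₁ ∧ ¬ F₂ x₂, fun _ _ _ ↦ False,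
    fun p ↦ fnr (post p), ?_⟩
  refine
    { init := fun p x₁ x₂ hpre hp ↦ h x₁ x₂ p hpre hp
      final := ?_
      step₁ := fun p x₁ x₁' x₂ hinv _ hT hp ↦ hinv (hp.head hT)
      step₂ := fun p x₁ x₂ x₂' hinv hs hU hp ↦ hfnr _ _ (hinv hp) hs.2 x₂' hU
      step₁₂ := fun _ _ _ _ _ _ hs ↦ hs.elim
      not_final₁ := fun _ _ _ _ hs _ ↦ hs
      not_final₂ := fun _ _ _ _ hs _ ↦ hs.2
      sched := ?_ }
  · rintro p x₁ x₂ hinv hF₁ hF₂ rfl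
    exact (hinv (.refl hF₁)).of_final hfix₂ hF₂
  · intro p x₁ x₂ _ hnf
    by_cases hF₁ : F₁ x₁
    · exact .inr (.inl ⟨hF₁, hnf.resolve_left (not_not_intro hF₁)⟩)
    · exact .inl hF₁

end Completeness

end

theorem tigni_encoding_sound_and_complete_general
    {σ₁ σ₂ : Type*} {R : Type*} [Nonempty R]
    (T₁ : σ₁ → σ₁ → Prop) (F₁ : σ₁ → Prop)
    (T₂ : σ₂ → σ₂ → Prop) (F₂ : σ₂ → Prop)
    (hFinFix₁ : ∀ v v', F₁ v → T₁ v v' → v' = v) (hFinLoop₁ : ∀ v, F₁ v → T₁ v v)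
    (hFinFix₂ : ∀ v v', F₂ v → T₂ v v' → v' = v)
    (pre post : σ₁ → σ₂ → Prop)
    (U₂ : R → σ₂ → σ₂ → Prop)
    (hU₂T : ∀ w w', T₂ w w' ↔ ∃ r, U₂ r w w')
    (hU₂fun : ∀ r w w' w'', U₂ r w w' → U₂ r w w'' → w' = w'')
    (hU₂tot : ∀ r w, ∃ w', U₂ r w w') :
    (∀ v₁ v₂ v₁', pre v₁ v₂ → Reach T₁ F₁ v₁ v₁' →
      (∃ v₂', Reach T₂ F₂ v₂ v₂' ∧ post v₁' v₂') ∨ Diverge T₂ F₂ v₂)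
    ↔
    ∃ (inv sch₁ sch₂ sch₁₂ : σ₁ → σ₁ → σ₂ → Prop) (fnr : σ₁ → σ₂ → R),
      -- (1)
      (∀ p x₁ x₂, pre x₁ x₂ → inv p x₁ x₂) ∧
      -- (2)
      (∀ p x₁ x₂, inv p x₁ x₂ → F₁ x₁ → F₂ x₂ → (p = x₁ → post x₁ x₂)) ∧
      -- (3₁)
      (∀ p x₁ x₁' x₂, inv p x₁ x₂ → sch₁ p x₁ x₂ → T₁ x₁ x₁' → inv p x₁' x₂) ∧
      -- (3₂)
      (∀ p x₁ x₂ x₂', inv p x₁ x₂ → sch₂ p x₁ x₂ → U₂ (fnr p x₂) x₂ x₂' →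
        inv p x₁ x₂') ∧
      -- (3₁₂)
      (∀ p x₁ x₁' x₂ x₂', inv p x₁ x₂ → sch₁₂ p x₁ x₂ → T₁ x₁ x₁' →
        U₂ (fnr p x₂) x₂ x₂' → inv p x₁' x₂') ∧
      -- (4₁)
      (∀ p x₁ x₂, inv p x₁ x₂ → sch₁ p x₁ x₂ → (¬ F₁ x₁ ∨ ¬ F₂ x₂) → ¬ F₁ x₁) ∧
      -- (4₂)
      (∀ p x₁ x₂, inv p x₁ x₂ → sch₂ p x₁ x₂ → (¬ F₁ x₁ ∨ ¬ F₂ x₂) → ¬ F₂ x₂) ∧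
      -- (5)
      (∀ p x₁ x₂, inv p x₁ x₂ → (¬ F₁ x₁ ∨ ¬ F₂ x₂) →
        sch₁ p x₁ x₂ ∨ sch₂ p x₁ x₂ ∨ sch₁₂ p x₁ x₂) := by
  constructor
  · intro h
    obtain ⟨inv, sch₁, sch₂, sch₁₂, fnr, hS⟩ :=
      exists_isSemanticSolution_of_tigni hFinFix₂ hU₂T hU₂fun h
    exact ⟨inv, sch₁, sch₂, sch₁₂, fnr, hS.init, hS.final, hS.step₁, hS.step₂, hS.step₁₂,
      hS.not_final₁, hS.not_final₂, hS.sched⟩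
  · rintro ⟨inv, sch₁, sch₂, sch₁₂, fnr, h₁, h₂, h₃₁, h₃₂, h₃₁₂, h₄₁, h₄₂, h₅⟩
    exact IsSemanticSolution.tigni (U₂ := U₂) ⟨h₁, h₂, h₃₁, h₃₂, h₃₁₂, h₄₁, h₄₂, h₅⟩
      hFinFix₁ hFinLoop₁ hFinFix₂ hU₂T hU₂tot

/-- Theorem 3 (Soundness and Completeness of the TI-GNI encoding C_TIGNI). -/
theorem tigni_encoding_sound_and_complete
    {σ₁ σ₂ : Type*} {R : Type*} [Nonempty R]
    (T₁ : σ₁ → σ₁ → Prop) (F₁ : σ₁ → Prop)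
    (T₂ : σ₂ → σ₂ → Prop) (F₂ : σ₂ → Prop)
    (hFinFix₁ : ∀ v v', F₁ v → T₁ v v' → v' = v) (hFinLoop₁ : ∀ v, F₁ v → T₁ v v)
    (hFinFix₂ : ∀ v v', F₂ v → T₂ v v' → v' = v) (hFinLoop₂ : ∀ v, F₂ v → T₂ v v)
    (pre post : σ₁ → σ₂ → Prop)
    (U₂ : R → σ₂ → σ₂ → Prop)
    (hU₂T : ∀ w w', T₂ w w' ↔ ∃ r, U₂ r w w')
    (hU₂fun : ∀ r w w' w'', U₂ r w w' → U₂ r w w'' → w' = w'')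
    (hU₂tot : ∀ r w, ∃ w', U₂ r w w') :
    (∀ v₁ v₂ v₁', pre v₁ v₂ → Reach T₁ F₁ v₁ v₁' →
      (∃ v₂', Reach T₂ F₂ v₂ v₂' ∧ post v₁' v₂') ∨ Diverge T₂ F₂ v₂)
    ↔
    ∃ (inv sch₁ sch₂ sch₁₂ : σ₁ → σ₁ → σ₂ → Prop) (fnr : σ₁ → σ₂ → R),
      -- (1)
      (∀ p x₁ x₂, pre x₁ x₂ → inv p x₁ x₂) ∧
      -- (2)
      (∀ p x₁ x₂, inv p x₁ x₂ → F₁ x₁ → F₂ x₂ → (p = x₁ → post x₁ x₂)) ∧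
      -- (3₁)
      (∀ p x₁ x₁' x₂, inv p x₁ x₂ → sch₁ p x₁ x₂ → T₁ x₁ x₁' → inv p x₁' x₂) ∧
      -- (3₂)
      (∀ p x₁ x₂ x₂', inv p x₁ x₂ → sch₂ p x₁ x₂ → U₂ (fnr p x₂) x₂ x₂' →
        inv p x₁ x₂') ∧
      -- (3₁₂)
      (∀ p x₁ x₁' x₂ x₂', inv p x₁ x₂ → sch₁₂ p x₁ x₂ → T₁ x₁ x₁' →
        U₂ (fnr p x₂) x₂ x₂' → inv p x₁' x₂') ∧
      -- (4₁)
      (∀ p x₁ x₂, inv p x₁ x₂ → sch₁ p x₁ x₂ → (¬ F₁ x₁ ∨ ¬ F₂ x₂) → ¬ F₁ x₁) ∧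
      -- (4₂)
      (∀ p x₁ x₂, inv p x₁ x₂ → sch₂ p x₁ x₂ → (¬ F₁ x₁ ∨ ¬ F₂ x₂) → ¬ F₂ x₂) ∧
      -- (5)
      (∀ p x₁ x₂, inv p x₁ x₂ → (¬ F₁ x₁ ∨ ¬ F₂ x₂) →
        sch₁ p x₁ x₂ ∨ sch₂ p x₁ x₂ ∨ sch₁₂ p x₁ x₂) :=
  tigni_encoding_sound_and_complete_general T₁ F₁ T₂ F₂ hFinFix₁ hFinLoop₁ hFinFix₂ pre post U₂ hU₂T
    hU₂fun hU₂tot
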